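/- With ω₁ = dθ − cosψ·((κc²−h²)/(2c³))dh − sinψ·h·dq, ω₂ = dφ + sinψ·((κc²−h²)/(2c³))dh − cosψ·h·dq, ω₃ = dψ + (2c³/(κc²−h²))dq, and c₁,…,c₅ defined by c₁ = 6c³θ − 4h(2c³q+κc²ψ)sinψ − h(3c²κ−h²)cosψ, c₂ = 6c³φ − 4h(2c³q+κc²ψ)cosψ + h(3c²κ−h²)sinψ, c₃ = 2c³q+κc²ψ, c₄ = −h sinψ, c₅ = h cosψ, the 1-forms Θ₁ = dc₁ − 2c₄dc₃ − 4c₃dc₄, Θ₂ = dc₂ + 2c₅dc₃ + 4c₃dc₅, Θ₃ = dc₃ + c₅dc₄ − c₄dc₅ satisfy Θ₁ = 6c³ω₁ + h sinψ(κc²−h²)ω₃, Θ₂ = 6c³ω₂ + h cosψ(κc²−h²)ω₃, Θ₃ = −(h²−κc²)ω₃. -/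

import Mathlib

/-! The differentials of the cᵢ are computed explicitly by the chain rule. Multiplying ω₁, ω₂ by
2c³ and ω₃ by κc² − h² clears their denominators, after which each of the three identities is a
polynomial identity in θ, φ, h, q, ψ, sin ψ, cos ψ, using only sin²ψ + cos²ψ = 1. -/

section
variable (c κ : ℝ)

/-- Coordinates on ℝ⁵: (θ,φ,h,q,ψ) = indices (0,1,2,3,4). -/
noncomputable def c1f (x : Fin 5 → ℝ) : ℝ :=
  6 * c ^ 3 * x 0 - 4 * x 2 * (2 * c ^ 3 * x 3 + κ * c ^ 2 * x 4) * Real.sin (x 4)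
    - x 2 * (3 * c ^ 2 * κ - (x 2) ^ 2) * Real.cos (x 4)

noncomputable def c2f (x : Fin 5 → ℝ) : ℝ :=
  6 * c ^ 3 * x 1 - 4 * x 2 * (2 * c ^ 3 * x 3 + κ * c ^ 2 * x 4) * Real.cos (x 4)
    + x 2 * (3 * c ^ 2 * κ - (x 2) ^ 2) * Real.sin (x 4)

noncomputable def c3f (x : Fin 5 → ℝ) : ℝ := 2 * c ^ 3 * x 3 + κ * c ^ 2 * x 4

noncomputable def c4f (x : Fin 5 → ℝ) : ℝ := -Real.sin (x 4) * x 2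

noncomputable def c5f (x : Fin 5 → ℝ) : ℝ := Real.cos (x 4) * x 2

/-- ω₁ evaluated at point x on tangent vector v. -/
noncomputable def om1 (x v : Fin 5 → ℝ) : ℝ :=
  v 0 - Real.cos (x 4) * ((κ * c ^ 2 - (x 2) ^ 2) / (2 * c ^ 3)) * v 2
    - Real.sin (x 4) * x 2 * v 3

noncomputable def om2 (x v : Fin 5 → ℝ) : ℝ :=
  v 1 + Real.sin (x 4) * ((κ * c ^ 2 - (x 2) ^ 2) / (2 * c ^ 3)) * v 2
    - Real.cos (x 4) * x 2 * v 3

noncomputable def om3 (x v : Fin 5 → ℝ) : ℝ :=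
  v 4 + (2 * c ^ 3 / (κ * c ^ 2 - (x 2) ^ 2)) * v 3

end

open Real

section
variable (c κ : ℝ) (x v : Fin 5 → ℝ)

lemma hasFDerivAt_c3f :
    HasFDerivAt (c3f c κ) ((2 * c ^ 3) • ContinuousLinearMap.proj (R := ℝ) (φ := fun _ => ℝ) 3
      + (κ * c ^ 2) • ContinuousLinearMap.proj 4) x :=
  ((hasFDerivAt_apply 3 x).const_mul (2 * c ^ 3)).add ((hasFDerivAt_apply 4 x).const_mul (κ * c ^ 2))

lemma fderiv_c3f_apply : fderiv ℝ (c3f c κ) x v = 2 * c ^ 3 * v 3 + κ * c ^ 2 * v 4 := by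
  simp [(hasFDerivAt_c3f c κ x).fderiv]

lemma fderiv_c4f_apply : fderiv ℝ c4f x v = -(cos (x 4) * v 4 * x 2 + sin (x 4) * v 2) := by
  have h : HasFDerivAt c4f _ x := (hasFDerivAt_apply 4 x).sin.neg.mul (hasFDerivAt_apply 2 x)
  simp only [h.fderiv, Pi.neg_apply, neg_smul, smul_neg, add_apply, neg_apply, smul_apply,
    ContinuousLinearMap.proj_apply, smul_eq_mul]
  ring

lemma fderiv_c5f_apply : fderiv ℝ c5f x v = -sin (x 4) * v 4 * x 2 + cos (x 4) * v 2 := by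
  have h : HasFDerivAt c5f _ x := (hasFDerivAt_apply 4 x).cos.mul (hasFDerivAt_apply 2 x)
  simp only [h.fderiv, add_apply, smul_apply, ContinuousLinearMap.proj_apply, smul_eq_mul]
  ring

lemma fderiv_c1f_apply : fderiv ℝ (c1f c κ) x v =
    6 * c ^ 3 * v 0 - 4 * sin (x 4) * (v 2 * c3f c κ x + x 2 * (2 * c ^ 3 * v 3 + κ * c ^ 2 * v 4))
      - 4 * x 2 * c3f c κ x * cos (x 4) * v 4 - 3 * (c ^ 2 * κ - x 2 ^ 2) * cos (x 4) * v 2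
      + x 2 * (3 * c ^ 2 * κ - x 2 ^ 2) * sin (x 4) * v 4 := by
  have hh := hasFDerivAt_apply (𝕜 := ℝ) 2 x
  have hψ := hasFDerivAt_apply (𝕜 := ℝ) 4 x
  have h : HasFDerivAt (c1f c κ) _ x :=
    (((hasFDerivAt_apply 0 x).const_mul (6 * c ^ 3)).sub
      (((hh.const_mul 4).mul (hasFDerivAt_c3f c κ x)).mul hψ.sin)).sub
      ((hh.mul ((hh.pow 2).const_sub (3 * c ^ 2 * κ))).mul hψ.cos)
  simp only [h.fderiv, c3f, Pi.mul_apply, nsmul_eq_mul, add_apply, sub_apply, neg_apply, smul_apply,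
    ContinuousLinearMap.proj_apply, smul_eq_mul]
  ring

lemma fderiv_c2f_apply : fderiv ℝ (c2f c κ) x v =
    6 * c ^ 3 * v 1 - 4 * cos (x 4) * (v 2 * c3f c κ x + x 2 * (2 * c ^ 3 * v 3 + κ * c ^ 2 * v 4))
      + 4 * x 2 * c3f c κ x * sin (x 4) * v 4 + 3 * (c ^ 2 * κ - x 2 ^ 2) * sin (x 4) * v 2
      + x 2 * (3 * c ^ 2 * κ - x 2 ^ 2) * cos (x 4) * v 4 := by
  have hh := hasFDerivAt_apply (𝕜 := ℝ) 2 x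
  have hψ := hasFDerivAt_apply (𝕜 := ℝ) 4 x
  have h : HasFDerivAt (c2f c κ) _ x :=
    (((hasFDerivAt_apply 1 x).const_mul (6 * c ^ 3)).sub
      (((hh.const_mul 4).mul (hasFDerivAt_c3f c κ x)).mul hψ.cos)).add
      ((hh.mul ((hh.pow 2).const_sub (3 * c ^ 2 * κ))).mul hψ.sin)
  simp only [h.fderiv, c3f, Pi.mul_apply, nsmul_eq_mul, add_apply, sub_apply, neg_apply, smul_apply,
    ContinuousLinearMap.proj_apply, smul_eq_mul]
  ring

lemma two_mul_pow_three_mul_om1 (hc : c ≠ 0) : 2 * c ^ 3 * om1 c κ x v =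
    2 * c ^ 3 * v 0 - cos (x 4) * (κ * c ^ 2 - x 2 ^ 2) * v 2 - 2 * c ^ 3 * sin (x 4) * x 2 * v 3 := by
  unfold om1
  field_simp

lemma two_mul_pow_three_mul_om2 (hc : c ≠ 0) : 2 * c ^ 3 * om2 c κ x v =
    2 * c ^ 3 * v 1 + sin (x 4) * (κ * c ^ 2 - x 2 ^ 2) * v 2 - 2 * c ^ 3 * cos (x 4) * x 2 * v 3 := by
  unfold om2
  field_simp

lemma sub_mul_om3 (hne : κ * c ^ 2 - x 2 ^ 2 ≠ 0) :
    (κ * c ^ 2 - x 2 ^ 2) * om3 c κ x v = (κ * c ^ 2 - x 2 ^ 2) * v 4 + 2 * c ^ 3 * v 3 := by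
  unfold om3
  field_simp

end

/-- the 1-forms Θ₁ = dc₁ − 2c₄dc₃ − 4c₃dc₄,
Θ₂ = dc₂ + 2c₅dc₃ + 4c₃dc₅, Θ₃ = dc₃ + c₅dc₄ − c₄dc₅ satisfy
Θ₁ = 6c³ω₁ + h sinψ (κc²−h²) ω₃, Θ₂ = 6c³ω₂ + h cosψ (κc²−h²) ω₃,
Θ₃ = −(h²−κc²) ω₃, as 1-forms (i.e. evaluated on every tangent vector). -/
theorem stmt12 (c κ : ℝ) (hc : c ≠ 0) (x : Fin 5 → ℝ)
    (hne : κ * c ^ 2 - (x 2) ^ 2 ≠ 0) (v : Fin 5 → ℝ) :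
    (fderiv ℝ (c1f c κ) x v - 2 * c4f x * fderiv ℝ (c3f c κ) x v
        - 4 * c3f c κ x * fderiv ℝ c4f x v
      = 6 * c ^ 3 * om1 c κ x v
        + x 2 * Real.sin (x 4) * (κ * c ^ 2 - (x 2) ^ 2) * om3 c κ x v) ∧
    (fderiv ℝ (c2f c κ) x v + 2 * c5f x * fderiv ℝ (c3f c κ) x v
        + 4 * c3f c κ x * fderiv ℝ c5f x v
      = 6 * c ^ 3 * om2 c κ x v
        + x 2 * Real.cos (x 4) * (κ * c ^ 2 - (x 2) ^ 2) * om3 c κ x v) ∧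
    (fderiv ℝ (c3f c κ) x v + c5f x * fderiv ℝ c4f x v - c4f x * fderiv ℝ c5f x v
      = -((x 2) ^ 2 - κ * c ^ 2) * om3 c κ x v) := by
  rw [fderiv_c1f_apply, fderiv_c2f_apply, fderiv_c3f_apply, fderiv_c4f_apply, fderiv_c5f_apply]
  simp only [c3f, c4f, c5f]
  refine ⟨?_, ?_, ?_⟩
  · linear_combination -3 * two_mul_pow_three_mul_om1 c κ x v hc
      - x 2 * sin (x 4) * sub_mul_om3 c κ x v hne
  · linear_combination -3 * two_mul_pow_three_mul_om2 c κ x v hc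
      - x 2 * cos (x 4) * sub_mul_om3 c κ x v hne
  · linear_combination -(x 2 ^ 2 * v 4) * sin_sq_add_cos_sq (x 4) - sub_mul_om3 c κ x v hne
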